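/- arXiv:1005.0247 — 3 statements merged into one kernel-verified Lean document; each statement's English description precedes it below -/
import Mathlib

section
/- Let Φ : [0,∞] → [0,∞] be a non-decreasing function which is finite on [0,∞), let p ∈ (0,∞), and set Φ_p(t) = Φ(t^p), H_p(t) = log Φ_p(t). Let t₀ = sup{ t : Φ_p(t) = 0 } and let δ > t₀. Then ∫_δ^∞ dH_p(t)/t = ∞ (Lebesgue–Stieltjes integral) if and only if ∫_δ^∞ H_p(t) dt/t² = ∞. -/
/-!
Writing `1 / t = ∫_t^∞ ds / s²` and applying Tonelli turns `∫_δ^∞ dF(t) / t` into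
`∫_δ^∞ (F s - F δ) ds / s²`, where `F` is the right-continuous function generating the measure.
Since `∫_δ^∞ ds / s² < ∞`, the constant `F δ` does not affect divergence, and `F = H_p` almost
everywhere on `(t₀, ∞)` because `H_p` is monotone there and a monotone function is continuous
off a countable set.
-/

open MeasureTheory Set Function
open scoped ENNReal

lemma setLIntegral_Ioi_inv_sq {t : ℝ} (ht : 0 < t) :
    ∫⁻ s in Ioi t, ENNReal.ofReal (1 / s ^ 2) = ENNReal.ofReal (1 / t) := by
  have hrpow : ∀ s ∈ Ioi t, ENNReal.ofReal (1 / s ^ 2) = ENNReal.ofReal (s ^ (-2 : ℝ)) := by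
    intro s hs
    rw [Real.rpow_neg (ht.trans hs).le, one_div, Real.rpow_ofNat]
  rw [setLIntegral_congr_fun measurableSet_Ioi hrpow,
    ← ofReal_integral_eq_lintegral_ofReal (integrableOn_Ioi_rpow_of_lt (by norm_num) ht)
      ((ae_restrict_iff' measurableSet_Ioi).2
        (ae_of_all _ fun s hs => Real.rpow_nonneg (ht.trans hs).le _)),
    integral_Ioi_rpow_of_lt (by norm_num) ht]
  norm_num [Real.rpow_neg_one]

theorem StieltjesFunction.setLIntegral_Ioi_inv (F : StieltjesFunction ℝ) {δ : ℝ} (hδ : 0 < δ) :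
    ∫⁻ t in Ioi δ, ENNReal.ofReal (1 / t) ∂F.measure
      = ∫⁻ s in Ioi δ, ENNReal.ofReal ((F s - F δ) / s ^ 2) := by
  set K : ℝ → ℝ → ℝ≥0∞ := fun t s => {q : ℝ × ℝ | q.1 ≤ q.2}.indicator
    (fun q => ENNReal.ofReal (1 / q.2 ^ 2)) (t, s)
  have hK_meas : Measurable (uncurry K) :=
    (measurable_const.div (measurable_snd.pow_const 2)).ennreal_ofReal.indicator
      (measurableSet_le measurable_fst measurable_snd)
  have hK_left : ∀ t ∈ Ioi δ, ∫⁻ s, K t s = ENNReal.ofReal (1 / t) := by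
    intro t ht
    rw [← setLIntegral_Ioi_inv_sq (hδ.trans ht), setLIntegral_congr Ioi_ae_eq_Ici,
      ← lintegral_indicator measurableSet_Ici]
    rfl
  have hK_right : ∀ s, ∫⁻ t in Ioi δ, K t s ∂F.measure
      = ENNReal.ofReal (1 / s ^ 2) * F.measure (Ioc δ s) := by
    intro s
    change ∫⁻ t in Ioi δ, (Iic s).indicator (fun _ => ENNReal.ofReal (1 / s ^ 2)) t ∂F.measure = _
    rw [lintegral_indicator_const measurableSet_Iic, Measure.restrict_apply measurableSet_Iic,
      Iic_inter_Ioi]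
  calc ∫⁻ t in Ioi δ, ENNReal.ofReal (1 / t) ∂F.measure
      = ∫⁻ t in Ioi δ, (∫⁻ s, K t s) ∂F.measure :=
        (setLIntegral_congr_fun _root_.measurableSet_Ioi hK_left).symm
    _ = ∫⁻ s, (∫⁻ t in Ioi δ, K t s ∂F.measure) := lintegral_lintegral_swap hK_meas.aemeasurable
    _ = ∫⁻ s, ENNReal.ofReal (1 / s ^ 2) * F.measure (Ioc δ s) := lintegral_congr hK_right
    _ = ∫⁻ s in Ioi δ, ENNReal.ofReal ((F s - F δ) / s ^ 2) := by
        rw [← lintegral_indicator _root_.measurableSet_Ioi]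
        refine lintegral_congr fun s => ?_
        rw [F.measure_Ioc]
        by_cases hs : δ < s
        · rw [indicator_of_mem (show s ∈ Ioi δ from hs), ← ENNReal.ofReal_mul (by positivity),
            one_div_mul_eq_div]
        · rw [indicator_of_notMem (show s ∉ Ioi δ from hs), ENNReal.ofReal_of_nonpos
            (sub_nonpos.2 (F.mono (not_lt.1 hs))), mul_zero]

lemma setLIntegral_Ioi_div_sq_le_add {δ k : ℝ} (hδ : 0 < δ) (hk : 0 ≤ k) {a b : ℝ → ℝ}
    (hb : Measurable b) (hab : ∀ s ∈ Ioi δ, a s ≤ b s + k) :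
    ∫⁻ s in Ioi δ, ENNReal.ofReal (a s / s ^ 2)
      ≤ (∫⁻ s in Ioi δ, ENNReal.ofReal (b s / s ^ 2)) + ENNReal.ofReal (k / δ) := by
  have hpointwise : ∀ s ∈ Ioi δ, ENNReal.ofReal (a s / s ^ 2)
      ≤ ENNReal.ofReal (b s / s ^ 2) + ENNReal.ofReal k * ENNReal.ofReal (1 / s ^ 2) := by
    intro s hs
    rw [← ENNReal.ofReal_mul hk, mul_one_div]
    refine (ENNReal.ofReal_le_ofReal ?_).trans ENNReal.ofReal_add_le
    rw [← add_div]
    gcongr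
    exact hab s hs
  have hbm : Measurable fun s => ENNReal.ofReal (b s / s ^ 2) := by fun_prop
  calc ∫⁻ s in Ioi δ, ENNReal.ofReal (a s / s ^ 2)
      ≤ ∫⁻ s in Ioi δ, (ENNReal.ofReal (b s / s ^ 2)
          + ENNReal.ofReal k * ENNReal.ofReal (1 / s ^ 2)) :=
        setLIntegral_mono' measurableSet_Ioi hpointwise
    _ = (∫⁻ s in Ioi δ, ENNReal.ofReal (b s / s ^ 2)) + ENNReal.ofReal (k / δ) := by
        rw [lintegral_add_left hbm,
          lintegral_const_mul _ (by fun_prop), setLIntegral_Ioi_inv_sq hδ,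
          ← ENNReal.ofReal_mul hk, mul_one_div]

lemma setLIntegral_Ioi_sub_const_div_sq_eq_top_iff {δ : ℝ} (hδ : 0 < δ) (c : ℝ) {g : ℝ → ℝ}
    (hg : Measurable g) :
    ∫⁻ s in Ioi δ, ENNReal.ofReal ((g s - c) / s ^ 2) = ∞ ↔
      ∫⁻ s in Ioi δ, ENNReal.ofReal (g s / s ^ 2) = ∞ := by
  have hle₁ := setLIntegral_Ioi_div_sq_le_add hδ (abs_nonneg c) hg
    (a := fun s => g s - c) fun s _ => by linarith [neg_abs_le c]
  have hle₂ := setLIntegral_Ioi_div_sq_le_add hδ (abs_nonneg c) (b := fun s => g s - c)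
    (by fun_prop) (a := g) fun s _ => by linarith [le_abs_self c]
  constructor
  · intro h
    simpa [h, ENNReal.add_eq_top] using hle₁
  · intro h
    simpa [h, ENNReal.add_eq_top] using hle₂

theorem MonotoneOn.ae_rightLim_eq {f : ℝ → ℝ} {s : Set ℝ} (μ : Measure ℝ)
    [NullSingletonClass μ] (hs : IsOpen s) (hf : MonotoneOn f s) :
    ∀ᵐ t ∂μ.restrict s, rightLim f t = f t := by
  rw [ae_restrict_iff' hs.measurableSet]
  filter_upwards [hf.countable_not_continuousWithinAt.ae_notMem μ] with t hwithin ht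
  have hcont : ContinuousAt f t :=
    (continuousWithinAt_iff_continuousAt (hs.mem_nhds ht)).1 (by simpa [ht] using hwithin)
  exact hcont.continuousWithinAt.rightLim_eq

/-- Beyond the last zero `ψ` is positive, unless it vanishes on all of `[0, ∞)`; then
`Real.log ∘ ψ` is identically `0` there, by the convention `Real.log 0 = 0`. -/
lemma monotoneOn_log_Ioi_sSup_zeros {ψ : ℝ → ℝ} (hmono : MonotoneOn ψ (Ici 0))
    (hnonneg : ∀ t, 0 ≤ t → 0 ≤ ψ t) :
    MonotoneOn (fun t => Real.log (ψ t)) (Ioi (sSup {t | 0 ≤ t ∧ ψ t = 0})) := by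
  intro a ha b _ hab
  have ha0 : 0 ≤ a := (Real.sSup_nonneg fun t ht => ht.1).trans (le_of_lt ha)
  rcases (hnonneg a ha0).lt_or_eq with hpos | hzero
  · exact Real.log_le_log hpos (hmono ha0 (ha0.trans hab) hab)
  · have hunbdd : ¬BddAbove {t | 0 ≤ t ∧ ψ t = 0} := fun hbdd =>
      (le_csSup hbdd ⟨ha0, hzero.symm⟩).not_gt ha
    obtain ⟨s, ⟨hs0, hs⟩, hbs⟩ := not_bddAbove_iff.1 hunbdd b
    have hb : ψ b = 0 :=
      le_antisymm (hs ▸ hmono (ha0.trans hab) hs0 hbs.le) (hnonneg b (ha0.trans hab))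
    simp [← hzero, hb]

/-- Let `Φ : [0,∞] → [0,∞]` be non-decreasing and finite on `[0,∞)`
(modelled as a non-decreasing non-negative real function on `[0,∞)`), `p ∈ (0,∞)`,
`Φ_p(t) = Φ(t^p)`, `H_p(t) = log Φ_p(t)`, `t₀ = sup{ t : Φ_p(t) = 0 }` and `δ > t₀`.
Then `∫_δ^∞ dH_p(t)/t = ∞` (the Lebesgue–Stieltjes integral, represented via any
monotone `G` agreeing on `(t₀,∞)` with the right-continuous modification of `H_p`)
holds if and only if `∫_δ^∞ H_p(t) dt/t² = ∞`. -/
theorem stmt_4 (Φ : ℝ → ℝ) (hΦmono : MonotoneOn Φ (Set.Ici 0))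
    (hΦnonneg : ∀ t : ℝ, 0 ≤ t → 0 ≤ Φ t)
    (p : ℝ) (hp : 0 < p)
    (Hp : ℝ → ℝ) (hHp : Hp = fun t : ℝ => Real.log (Φ (t ^ p)))
    (t₀ : ℝ) (ht₀ : t₀ = sSup {t : ℝ | 0 ≤ t ∧ Φ (t ^ p) = 0})
    (δ : ℝ) (hδ : t₀ < δ)
    (G : ℝ → ℝ) (hGmono : Monotone G)
    (hGH : ∀ t : ℝ, t₀ < t → G t = Function.rightLim Hp t) :
    (∫⁻ t in Set.Ioi δ, ENNReal.ofReal (1 / t) ∂(hGmono.stieltjesFunction.measure) = ∞)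
      ↔ ∫⁻ t in Set.Ioi δ, ENNReal.ofReal (Hp t / t ^ 2) = ∞ := by
  have hδ0 : 0 < δ := (ht₀ ▸ Real.sSup_nonneg fun t ht => ht.1 : 0 ≤ t₀).trans_lt hδ
  have hHmono : MonotoneOn Hp (Ioi t₀) := by
    subst hHp ht₀
    exact monotoneOn_log_Ioi_sSup_zeros
      (fun a ha b hb hab => hΦmono (Real.rpow_nonneg ha p) (Real.rpow_nonneg hb p)
        (Real.rpow_le_rpow ha hab hp.le))
      (fun t ht => hΦnonneg _ (Real.rpow_nonneg ht p))
  have hFH : ∀ᵐ t ∂volume.restrict (Ioi t₀), hGmono.stieltjesFunction t = Hp t := by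
    filter_upwards [MonotoneOn.ae_rightLim_eq volume isOpen_Ioi (hGmono.monotoneOn (Ioi t₀)),
      MonotoneOn.ae_rightLim_eq volume isOpen_Ioi hHmono, self_mem_ae_restrict measurableSet_Ioi]
      with t hG hH ht
    rw [hGmono.stieltjesFunction_eq, hG, hGH t ht, hH]
  rw [StieltjesFunction.setLIntegral_Ioi_inv _ hδ0,
    setLIntegral_Ioi_sub_const_div_sq_eq_top_iff hδ0 _ hGmono.stieltjesFunction.mono.measurable,
    lintegral_congr_ae ((ae_restrict_of_ae_restrict_of_subset (Ioi_subset_Ioi hδ.le) hFH).mono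
      fun t ht => by rw [ht])]
end

section
/- Let Φ : [0,∞] → [0,∞] be a non-decreasing function which is finite on [0,∞), let p ∈ (0,∞), and set Φ_p(t) = Φ(t^p), H_p(t) = log Φ_p(t), with H_p⁻¹(η) = inf{ t : H_p(t) ≥ η }. Let t₀ = sup{ t : Φ_p(t) = 0 }. Then ∫_δ^∞ H_p(t) dt/t² = ∞ for some δ > t₀ if and only if ∫_{δ*}^∞ dη/H_p⁻¹(η) = ∞ for some δ* > H_p(+0), where H_p(+0) denotes the limit of H_p(t) as t → 0⁺. -/
/-! For non-decreasing `H`, Tonelli applied to `1[η ≤ H t] / t²` on `(δ, ∞) × (H δ, ∞)` gives the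
exact identity `∫_δ^∞ (H t - H δ) dt/t² = ∫_{H δ}^∞ dη / H⁻¹(η)`, since `{t > δ | η ≤ H t}` is a
ray starting at `H⁻¹(η)`. Subtracting `H δ` changes the left side by the finite amount `H δ / δ`,
and moving the lower limit `δ*` changes the right side by a finite amount, because
`1 / H⁻¹(η) ≤ 1 / t` as soon as `η > H t`. -/

open MeasureTheory Set
open scoped ENNReal

theorem setLIntegral_one_div_sq_Ioi {a : ℝ} (ha : 0 < a) :
    ∫⁻ t in Ioi a, ENNReal.ofReal (1 / t ^ 2) = ENNReal.ofReal (1 / a) := by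
  have hrpow : EqOn (fun t : ℝ => 1 / t ^ 2) (fun t => t ^ (-2 : ℝ)) (Ioi a) := fun t ht => by
    simp [Real.rpow_neg (ha.trans ht).le]
  have hint : IntegrableOn (fun t : ℝ => 1 / t ^ 2) (Ioi a) :=
    (integrableOn_Ioi_rpow_of_lt (by norm_num) ha).congr_fun hrpow.symm measurableSet_Ioi
  rw [← ofReal_integral_eq_lintegral_ofReal hint (ae_of_all _ fun t => by positivity),
    setIntegral_congr_fun measurableSet_Ioi hrpow, integral_Ioi_rpow_of_lt (by norm_num) ha]
  norm_num [Real.rpow_neg_one]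

theorem setLIntegral_one_div_sq_of_Ioi_subset {a : ℝ} {S : Set ℝ} (ha : 0 < a)
    (hS : Ioi a ⊆ S) (hS' : S ⊆ Ici a) :
    ∫⁻ t in S, ENNReal.ofReal (1 / t ^ 2) = ENNReal.ofReal (1 / a) := by
  rw [← setLIntegral_one_div_sq_Ioi ha]
  refine le_antisymm ?_ (lintegral_mono_set hS)
  calc ∫⁻ t in S, ENNReal.ofReal (1 / t ^ 2)
      ≤ ∫⁻ t in Ici a, ENNReal.ofReal (1 / t ^ 2) := lintegral_mono_set hS'
    _ = ∫⁻ t in Ioi a, ENNReal.ofReal (1 / t ^ 2) := setLIntegral_congr Ioi_ae_eq_Ici.symm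

theorem Monotone.setLIntegral_one_div_sq_superlevel {g : ℝ → ℝ} (hg : Monotone g) {δ : ℝ}
    (hδ : 0 < δ) (η : ℝ) :
    ∫⁻ t in {t | δ < t ∧ η ≤ g t}, ENNReal.ofReal (1 / t ^ 2)
      = ENNReal.ofReal (1 / sInf {t | δ < t ∧ η ≤ g t}) := by
  set S := {t | δ < t ∧ η ≤ g t}
  rcases S.eq_empty_or_nonempty with hS | hS
  · simp [hS]
  refine setLIntegral_one_div_sq_of_Ioi_subset (hδ.trans_le (le_csInf hS fun t ht => ht.1.le))
    (fun t ht => ?_) (fun t ht => csInf_le ⟨δ, fun s hs => hs.1.le⟩ ht)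
  obtain ⟨s, hs, hst⟩ := exists_lt_of_csInf_lt hS ht
  exact ⟨hs.1.trans hst, hs.2.trans (hg hst.le)⟩

theorem Monotone.lintegral_Ioi_sub_div_sq {g : ℝ → ℝ} (hg : Monotone g) {δ : ℝ} (hδ : 0 < δ) :
    ∫⁻ t in Ioi δ, ENNReal.ofReal ((g t - g δ) / t ^ 2)
      = ∫⁻ η in Ioi (g δ), ENNReal.ofReal (1 / sInf {t | δ < t ∧ η ≤ g t}) := by
  have hvert : ∀ t, ENNReal.ofReal ((g t - g δ) / t ^ 2)
      = ∫⁻ η in Ioi (g δ), (Iic (g t)).indicator (fun _ => ENNReal.ofReal (1 / t ^ 2)) η := by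
    intro t
    rw [lintegral_indicator_const measurableSet_Iic, Measure.restrict_apply measurableSet_Iic,
      Iic_inter_Ioi, Real.volume_Ioc, div_eq_mul_one_div, ENNReal.ofReal_mul' (by positivity),
      mul_comm]
  have hhor : ∀ η, ∫⁻ t in Ioi δ, (Iic (g t)).indicator (fun _ => ENNReal.ofReal (1 / t ^ 2)) η
      = ENNReal.ofReal (1 / sInf {t | δ < t ∧ η ≤ g t}) := by
    intro η
    have hmeas : MeasurableSet {t | η ≤ g t} := measurableSet_le measurable_const hg.measurable
    rw [← hg.setLIntegral_one_div_sq_superlevel hδ η,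
      show {t | δ < t ∧ η ≤ g t} = {t | η ≤ g t} ∩ Ioi δ from inter_comm _ _,
      ← Measure.restrict_restrict hmeas, ← lintegral_indicator hmeas]
    rfl
  have hmeas : Measurable (Function.uncurry fun t η =>
      (Iic (g t)).indicator (fun _ => ENNReal.ofReal (1 / t ^ 2)) η) :=
    (Measurable.ennreal_ofReal (f := fun p : ℝ × ℝ => 1 / p.1 ^ 2) (by fun_prop)).indicator
      (measurableSet_le measurable_snd (hg.measurable.comp measurable_fst))
  simp_rw [hvert]
  rw [lintegral_lintegral_swap hmeas.aemeasurable]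
  simp_rw [hhor]

theorem lintegral_ofReal_sub_eq_top_iff {α : Type*} [MeasurableSpace α] {μ : Measure α}
    {f h : α → ℝ} (hh : AEMeasurable h μ) (hfin : ∫⁻ x, ENNReal.ofReal |h x| ∂μ ≠ ⊤) :
    ∫⁻ x, ENNReal.ofReal (f x - h x) ∂μ = ⊤ ↔ ∫⁻ x, ENNReal.ofReal (f x) ∂μ = ⊤ := by
  have key : ∀ {u v : α → ℝ}, (∀ x, |u x - v x| = |h x|) →
      ∫⁻ x, ENNReal.ofReal (u x) ∂μ = ⊤ → ∫⁻ x, ENNReal.ofReal (v x) ∂μ = ⊤ := by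
    intro u v huv hu
    have hle : ∫⁻ x, ENNReal.ofReal (u x) ∂μ
        ≤ ∫⁻ x, ENNReal.ofReal (v x) ∂μ + ∫⁻ x, ENNReal.ofReal |h x| ∂μ := by
      rw [← lintegral_add_right' _ hh.abs.ennreal_ofReal]
      refine lintegral_mono fun x => ?_
      rw [← huv x]
      exact (ENNReal.ofReal_le_ofReal (by linarith [le_abs_self (u x - v x)])).trans
        ENNReal.ofReal_add_le
    by_contra hv
    exact ENNReal.add_ne_top.2 ⟨hv, hfin⟩ (top_le_iff.1 (hu ▸ hle))
  exact ⟨key fun x => by rw [sub_sub_cancel_left, abs_neg],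
    key fun x => by rw [sub_sub_cancel]⟩

theorem lintegral_Ioi_eq_top_of_le_const {f : ℝ → ℝ≥0∞} {a b : ℝ} {C : ℝ≥0∞} (hC : C ≠ ⊤)
    (hf : ∀ x ∈ Ioc a b, f x ≤ C) (h : ∫⁻ x in Ioi a, f x = ⊤) : ∫⁻ x in Ioi b, f x = ⊤ := by
  have hIoc : ∫⁻ x in Ioc a b, f x ≠ ⊤ := by
    refine ne_top_of_le_ne_top ?_ (setLIntegral_mono' measurableSet_Ioc hf)
    rw [setLIntegral_const, Real.volume_Ioc]
    exact ENNReal.mul_ne_top hC ENNReal.ofReal_ne_top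
  have hle : ∫⁻ x in Ioi a, f x ≤ (∫⁻ x in Ioc a b, f x) + ∫⁻ x in Ioi b, f x := calc
    ∫⁻ x in Ioi a, f x ≤ ∫⁻ x in Ioc a b ∪ Ioi b, f x :=
      lintegral_mono_set fun x hx => (le_or_gt x b).imp (fun hxb => ⟨hx, hxb⟩) id
    _ ≤ _ := lintegral_union_le _ _ _
  by_contra hb
  exact ENNReal.add_ne_top.2 ⟨hIoc, hb⟩ (top_le_iff.1 (h ▸ hle))

/-- `sInf (logSuperlevel F η)` is `H⁻¹(η)` for `H = log ∘ F`; it is `0` when the set is empty, and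
then `1 / H⁻¹(η) = 0` too. -/
def logSuperlevel (F : ℝ → ℝ) (η : ℝ) : Set ℝ :=
  {t | 0 ≤ t ∧ F t ≠ 0 ∧ η ≤ Real.log (F t)}

section

variable {F : ℝ → ℝ} (hF : MonotoneOn F (Ici 0)) (hF0 : ∀ t, 0 ≤ t → 0 ≤ F t)
include hF hF0

theorem log_le_log_of_ne_zero {s t : ℝ} (hs : 0 ≤ s) (hst : s ≤ t) (hFs : F s ≠ 0) :
    Real.log (F s) ≤ Real.log (F t) :=
  Real.log_le_log ((hF0 s hs).lt_of_ne' hFs) (hF hs (hs.trans hst) hst)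

theorem ofReal_one_div_sInf_logSuperlevel_le {a η : ℝ} (ha : 0 < a)
    (h : F a = 0 ∨ Real.log (F a) < η) :
    ENNReal.ofReal (1 / sInf (logSuperlevel F η)) ≤ ENNReal.ofReal (1 / a) := by
  rcases (logSuperlevel F η).eq_empty_or_nonempty with hS | hS
  · simp [hS]
  refine ENNReal.ofReal_le_ofReal (one_div_le_one_div_of_le ha (le_csInf hS fun s hs => ?_))
  obtain ⟨hs0, hFs, hηs⟩ := hs
  by_contra! hsa
  rcases h with hFa | hlog
  · exact hFs (le_antisymm (hFa ▸ hF hs0 ha.le hsa.le) (hF0 s hs0))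
  · exact hlog.not_ge (hηs.trans (log_le_log_of_ne_zero hF hF0 hs0 hsa.le hFs))

theorem eq_zero_of_not_bddAbove_setOf_eq_zero (h : ¬ BddAbove {t | 0 ≤ t ∧ F t = 0})
    ⦃t : ℝ⦄ (ht : 0 ≤ t) : F t = 0 := by
  obtain ⟨s, ⟨hs0, hFs⟩, hts⟩ := not_bddAbove_iff.1 h t
  exact le_antisymm (hFs ▸ hF ht hs0 hts.le) (hF0 t ht)

section

variable {δ : ℝ} (hδ : 0 < δ) (hFδ : 0 < F δ)
include hδ hFδ

theorem monotone_log_max : Monotone fun t => Real.log (F (max δ t)) := fun _ _ hst =>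
  log_le_log_of_ne_zero hF hF0 (hδ.le.trans (le_max_left _ _)) (max_le_max le_rfl hst)
    (hFδ.trans_le (hF hδ.le (hδ.le.trans (le_max_left _ _)) (le_max_left _ _))).ne'

theorem logSuperlevel_eq {η : ℝ} (hη : Real.log (F δ) < η) :
    logSuperlevel F η = {t | δ < t ∧ η ≤ Real.log (F (max δ t))} := by
  ext t
  constructor
  · rintro ⟨ht0, hFt, hηt⟩
    have hδt : δ < t := by
      by_contra! htδ
      exact hη.not_ge (hηt.trans (log_le_log_of_ne_zero hF hF0 ht0 htδ hFt))
    exact ⟨hδt, by rwa [max_eq_right hδt.le]⟩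
  · rintro ⟨hδt, hηt⟩
    rw [max_eq_right hδt.le] at hηt
    exact ⟨(hδ.trans hδt).le, (hFδ.trans_le (hF hδ.le (hδ.trans hδt).le hδt.le)).ne', hηt⟩

theorem lintegral_log_div_sq_eq_top_iff :
    ∫⁻ t in Ioi δ, ENNReal.ofReal (Real.log (F t) / t ^ 2) = ⊤
      ↔ ∫⁻ η in Ioi (Real.log (F δ)), ENNReal.ofReal (1 / sInf (logSuperlevel F η)) = ⊤ := by
  set g : ℝ → ℝ := fun t => Real.log (F (max δ t))
  have hfin : ∫⁻ t in Ioi δ, ENNReal.ofReal |Real.log (F δ) / t ^ 2| ≠ ⊤ := by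
    simp_rw [abs_div, abs_pow, sq_abs, div_eq_mul_one_div |Real.log (F δ)|,
      ENNReal.ofReal_mul (abs_nonneg _)]
    rw [lintegral_const_mul' _ _ ENNReal.ofReal_ne_top, setLIntegral_one_div_sq_Ioi hδ]
    exact ENNReal.mul_ne_top ENNReal.ofReal_ne_top ENNReal.ofReal_ne_top
  have hlayer := (monotone_log_max hF hF0 hδ hFδ).lintegral_Ioi_sub_div_sq hδ
  have hshift : ∫⁻ t in Ioi δ, ENNReal.ofReal (Real.log (F t) / t ^ 2 - Real.log (F δ) / t ^ 2)
      = ∫⁻ η in Ioi (Real.log (F δ)), ENNReal.ofReal (1 / sInf (logSuperlevel F η)) := calc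
    ∫⁻ t in Ioi δ, ENNReal.ofReal (Real.log (F t) / t ^ 2 - Real.log (F δ) / t ^ 2)
      = ∫⁻ t in Ioi δ, ENNReal.ofReal ((g t - g δ) / t ^ 2) :=
        setLIntegral_congr_fun measurableSet_Ioi fun t ht => by
          simp only [g, max_self, max_eq_right (mem_Ioi.mp ht).le, sub_div]
    _ = ∫⁻ η in Ioi (g δ), ENNReal.ofReal (1 / sInf {t | δ < t ∧ η ≤ g t}) := hlayer
    _ = _ := by
        simp only [g, max_self]
        refine setLIntegral_congr_fun measurableSet_Ioi fun η hη => ?_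
        rw [logSuperlevel_eq hF hF0 hδ hFδ hη]
  rw [← lintegral_ofReal_sub_eq_top_iff (by fun_prop) hfin, hshift]

end

theorem exists_lintegral_log_div_sq_eq_top_iff :
    (∃ δ, sSup {t | 0 ≤ t ∧ F t = 0} < δ ∧
        ∫⁻ t in Ioi δ, ENNReal.ofReal (Real.log (F t) / t ^ 2) = ⊤)
      ↔ ∃ δs, (∃ t, 0 < t ∧ (F t = 0 ∨ Real.log (F t) < δs)) ∧
          ∫⁻ η in Ioi δs, ENNReal.ofReal (1 / sInf (logSuperlevel F η)) = ⊤ := by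
  by_cases hbdd : BddAbove {t | 0 ≤ t ∧ F t = 0}
  swap
  · have hzero := eq_zero_of_not_bddAbove_setOf_eq_zero hF hF0 hbdd
    refine iff_of_false ?_ ?_
    · rintro ⟨δ, hδ, h⟩
      rw [Real.sSup_of_not_bddAbove hbdd] at hδ
      rw [setLIntegral_eq_zero measurableSet_Ioi fun t ht => by
        simp [hzero (hδ.trans ht).le]] at h
      exact ENNReal.zero_ne_top h
    · rintro ⟨δs, -, h⟩
      have hempty : ∀ η, logSuperlevel F η = ∅ := fun η =>
        eq_empty_of_forall_notMem fun t ht => ht.2.1 (hzero ht.1)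
      simp [hempty] at h
  set t₀ := sSup {t | 0 ≤ t ∧ F t = 0}
  have ht₀ : 0 ≤ t₀ := Real.sSup_nonneg fun t ht => ht.1
  have hpos : ∀ δ, t₀ < δ → 0 < δ ∧ 0 < F δ := fun δ hδ =>
    have hδ0 := ht₀.trans_lt hδ
    ⟨hδ0, (hF0 δ hδ0.le).lt_of_ne' fun h => hδ.not_ge (le_csSup hbdd ⟨hδ0.le, h⟩)⟩
  constructor
  · rintro ⟨δ, hδ, h⟩
    obtain ⟨hδ0, hFδ⟩ := hpos δ hδ
    refine ⟨Real.log (F δ) + 1, ⟨δ, hδ0, Or.inr (lt_add_one _)⟩, ?_⟩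
    exact lintegral_Ioi_eq_top_of_le_const ENNReal.ofReal_ne_top
      (fun η hη => ofReal_one_div_sInf_logSuperlevel_le hF hF0 hδ0 (Or.inr hη.1))
      ((lintegral_log_div_sq_eq_top_iff hF hF0 hδ0 hFδ).1 h)
  · rintro ⟨δs, ⟨t, ht, hlow⟩, h⟩
    obtain ⟨hδ0, hFδ⟩ := hpos (t₀ + 1) (lt_add_one _)
    refine ⟨t₀ + 1, lt_add_one _, (lintegral_log_div_sq_eq_top_iff hF hF0 hδ0 hFδ).2 ?_⟩
    exact lintegral_Ioi_eq_top_of_le_const ENNReal.ofReal_ne_top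
      (fun η hη => ofReal_one_div_sInf_logSuperlevel_le hF hF0 ht
        (hlow.imp_right fun hlog => hlog.trans hη.1)) h

end

/-- Let `Φ : [0,∞] → [0,∞]` be non-decreasing and finite on `[0,∞)`
(modelled as a non-decreasing non-negative real function on `[0,∞)`), `p ∈ (0,∞)`,
`Φ_p(t) = Φ(t^p)`, `H_p(t) = log Φ_p(t)`, `t₀ = sup{ t : Φ_p(t) = 0 }`, and
`H_p⁻¹(η) = inf{ t : H_p(t) ≥ η }` (the infimum over `t ≥ 0` with `Φ_p(t) > 0` and
`log Φ_p(t) ≥ η`; the value `-∞` of `H_p` at points where `Φ_p = 0` never exceeds a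
real `η`). Then `∫_δ^∞ H_p(t) dt/t² = ∞` for some `δ > t₀` iff
`∫_{δ*}^∞ dη/H_p⁻¹(η) = ∞` for some `δ* > H_p(+0)`; the condition `δ* > H_p(+0)`
(where `H_p(+0) = lim_{t→0⁺} H_p(t) ∈ [-∞,∞)`) is expressed as: there is `t > 0`
with `Φ_p(t) = 0` (so `H_p(t) = -∞ < δ*`) or `log Φ_p(t) < δ*`. -/
theorem stmt_6 (Φ : ℝ → ℝ) (hΦmono : MonotoneOn Φ (Set.Ici 0))
    (hΦnonneg : ∀ t : ℝ, 0 ≤ t → 0 ≤ Φ t)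
    (p : ℝ) (hp : 0 < p)
    (Hp : ℝ → ℝ) (hHp : Hp = fun t : ℝ => Real.log (Φ (t ^ p)))
    (t₀ : ℝ) (ht₀ : t₀ = sSup {t : ℝ | 0 ≤ t ∧ Φ (t ^ p) = 0})
    (HpInv : ℝ → ℝ)
    (hHpInv : HpInv = fun η : ℝ =>
      sInf {t : ℝ | 0 ≤ t ∧ Φ (t ^ p) ≠ 0 ∧ η ≤ Real.log (Φ (t ^ p))}) :
    (∃ δ : ℝ, t₀ < δ ∧ ∫⁻ t in Set.Ioi δ, ENNReal.ofReal (Hp t / t ^ 2) = ∞)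
      ↔ ∃ δs : ℝ,
          (∃ t : ℝ, 0 < t ∧ (Φ (t ^ p) = 0 ∨ Real.log (Φ (t ^ p)) < δs)) ∧
          ∫⁻ η in Set.Ioi δs, ENNReal.ofReal (1 / HpInv η) = ∞ := by
  subst hHp ht₀ hHpInv
  have hrpow : MapsTo (fun t : ℝ => t ^ p) (Ici 0) (Ici 0) := fun t ht => Real.rpow_nonneg ht p
  exact exists_lintegral_log_div_sq_eq_top_iff
    (hΦmono.comp (Real.monotoneOn_rpow_Ici_of_exponent_nonneg hp.le) hrpow)
    fun t ht => hΦnonneg _ (hrpow ht)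
end

section
/- Let n ≥ 2 and let K : (0,1] → [1,∞) be a continuous function with I(1) < ∞, where I(t) = ∫₀^{t} dr/(r·K(r)). Define f : 𝔹ⁿ \ {0} → ℝⁿ by f(x) = (x/|x|)·exp(I(|x|)). Then f is a C¹ homeomorphism of the punctured unit ball 𝔹ⁿ \ {0} onto the spherical ring { y ∈ ℝⁿ : 1 < |y| < e^{I(1)} } which is differentiable with nonvanishing Jacobian at every point, and its outer dilatation satisfies K_O(x,f) = K(|x|) for every x ∈ 𝔹ⁿ \ {0}. -/
open MeasureTheory Metric Set Filter
open scoped Topology RealInnerProductSpace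
open InnerProductSpace

/-- `I(t) = ∫₀ᵗ dr/(r K(r))`. -/
noncomputable def Ifun (K : ℝ → ℝ) (t : ℝ) : ℝ :=
  ∫ r in Set.Ioo (0 : ℝ) t, 1 / (r * K r)

/-- The radial map `f(x) = (x/|x|)·exp(I(|x|))` on the punctured unit ball. -/
noncomputable def radMap (n : ℕ) (K : ℝ → ℝ) (x : EuclideanSpace ℝ (Fin n)) :
    EuclideanSpace ℝ (Fin n) :=
  (Real.exp (Ifun K ‖x‖) * ‖x‖⁻¹) • x

/-!
The map is radial: `f(x) = φ(|x|) x/|x|` with `φ = exp ∘ I` continuous and strictly increasing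
from `φ(0) = 1` to `φ(1) = e^{I(1)}`, so it maps the punctured ball bijectively onto the ring.
At `x ≠ 0`, with `r = |x|`, the derivative stretches the radial direction by
`φ'(r) = φ(r)/(r K(r))` and the orthogonal directions by `φ(r)/r`. As `K ≥ 1` the latter is the
larger, so `‖f'(x)‖ = φ(r)/r` and `J(x,f) = φ'(r) (φ(r)/r)^{n-1}`, whence `K_O(x,f) = K(r)`.
The Jacobian does not vanish, so the inverse function theorem makes `f` open, and its inverse
continuous.
-/

section Primitive

variable {K : ℝ → ℝ}

lemma Ifun_eq_intervalIntegral {t : ℝ} (ht : 0 ≤ t) :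
    Ifun K t = ∫ r in (0 : ℝ)..t, 1 / (r * K r) := by
  rw [intervalIntegral.integral_of_le ht, integral_Ioc_eq_integral_Ioo, Ifun]

lemma Ifun_zero : Ifun K 0 = 0 := by simp [Ifun]

lemma Ifun_continuousOn (hKint : IntegrableOn (fun r ↦ 1 / (r * K r)) (Ioo 0 1)) :
    ContinuousOn (Ifun K) (Icc 0 1) := by
  have hIoc : EqOn (Ifun K) (fun t ↦ ∫ r in Ioc 0 t, 1 / (r * K r)) (Icc 0 1) :=
    fun _ _ ↦ integral_Ioc_eq_integral_Ioo.symm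
  refine (intervalIntegral.continuousOn_primitive ?_).congr hIoc
  rwa [integrableOn_Icc_iff_integrableOn_Ioo]

lemma continuousOn_one_div_mul (hKcont : ContinuousOn K (Ioo 0 1))
    (hKpos : ∀ r ∈ Ioo 0 1, 0 < K r) : ContinuousOn (fun r ↦ 1 / (r * K r)) (Ioo 0 1) :=
  continuousOn_const.div (continuousOn_id.mul hKcont) fun t ht ↦ (mul_pos ht.1 (hKpos t ht)).ne'

lemma Ifun_hasDerivAt (hKcont : ContinuousOn K (Ioo 0 1)) (hKpos : ∀ r ∈ Ioo 0 1, 0 < K r)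
    (hKint : IntegrableOn (fun r ↦ 1 / (r * K r)) (Ioo 0 1)) {t : ℝ} (ht : t ∈ Ioo 0 1) :
    HasDerivAt (Ifun K) (1 / (t * K t)) t := by
  have hint : IntervalIntegrable (fun r ↦ 1 / (r * K r)) volume 0 t := by
    rw [intervalIntegrable_iff_integrableOn_Ioo_of_le ht.1.le]
    exact hKint.mono_set (Ioo_subset_Ioo_right ht.2.le)
  have hprim := intervalIntegral.integral_hasDerivAt_right hint
    (AEStronglyMeasurable.stronglyMeasurableAtFilter_of_mem hKint.1 (Ioo_mem_nhds ht.1 ht.2))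
    ((continuousOn_one_div_mul hKcont hKpos).continuousAt (Ioo_mem_nhds ht.1 ht.2))
  refine hprim.congr_of_eventuallyEq ?_
  filter_upwards [Ioo_mem_nhds ht.1 ht.2] with u hu using Ifun_eq_intervalIntegral hu.1.le

lemma Ifun_strictMonoOn (hKcont : ContinuousOn K (Ioo 0 1)) (hKpos : ∀ r ∈ Ioo 0 1, 0 < K r)
    (hKint : IntegrableOn (fun r ↦ 1 / (r * K r)) (Ioo 0 1)) :
    StrictMonoOn (Ifun K) (Icc 0 1) := by
  refine strictMonoOn_of_deriv_pos (convex_Icc 0 1) (Ifun_continuousOn hKint) fun t ht ↦ ?_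
  rw [interior_Icc] at ht
  rw [(Ifun_hasDerivAt hKcont hKpos hKint ht).deriv]
  exact one_div_pos.2 (mul_pos ht.1 (hKpos t ht))

lemma Ifun_contDiffOn (hKcont : ContinuousOn K (Ioo 0 1)) (hKpos : ∀ r ∈ Ioo 0 1, 0 < K r)
    (hKint : IntegrableOn (fun r ↦ 1 / (r * K r)) (Ioo 0 1)) :
    ContDiffOn ℝ 1 (Ifun K) (Ioo 0 1) := by
  have hderiv := fun t (ht : t ∈ Ioo (0 : ℝ) 1) ↦ Ifun_hasDerivAt hKcont hKpos hKint ht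
  rw [show (1 : WithTop ℕ∞) = 0 + 1 from rfl, contDiffOn_succ_iff_deriv_of_isOpen isOpen_Ioo]
  refine ⟨fun t ht ↦ (hderiv t ht).differentiableAt.differentiableWithinAt, by simp, ?_⟩
  rw [contDiffOn_zero, continuousOn_congr fun t ht ↦ (hderiv t ht).deriv]
  exact continuousOn_one_div_mul hKcont hKpos

end Primitive

section RadialStretch

variable {E : Type*} [NormedAddCommGroup E] [InnerProductSpace ℝ E]

noncomputable def radialStretch (a b : ℝ) (u : E) : E →L[ℝ] E :=
  a • ContinuousLinearMap.id ℝ E + (b - a) • rankOne ℝ u u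

variable {a b : ℝ} {u : E}

lemma radialStretch_apply (h : E) :
    radialStretch a b u h = a • h + ((b - a) * ⟪u, h⟫) • u := by
  simp [radialStretch, mul_smul]

lemma radialStretch_apply_of_inner_eq_zero {h : E} (hh : ⟪u, h⟫ = 0) :
    radialStretch a b u h = a • h := by
  simp [radialStretch_apply, hh]

lemma norm_radialStretch_apply_sq (hu : ‖u‖ = 1) (h : E) :
    ‖radialStretch a b u h‖ ^ 2 = a ^ 2 * ‖h‖ ^ 2 + (b ^ 2 - a ^ 2) * ⟪u, h⟫ ^ 2 := by
  rw [radialStretch_apply, norm_add_sq_real, norm_smul, norm_smul, real_inner_smul_left,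
    real_inner_smul_right, real_inner_comm, hu, mul_pow, mul_pow, Real.norm_eq_abs,
    Real.norm_eq_abs, sq_abs, sq_abs]
  ring

lemma norm_radialStretch_apply_le (hu : ‖u‖ = 1) (hba : |b| ≤ a) (h : E) :
    ‖radialStretch a b u h‖ ≤ a * ‖h‖ := by
  have ha : 0 ≤ a := (abs_nonneg b).trans hba
  have hcs : ⟪u, h⟫ ^ 2 ≤ ‖h‖ ^ 2 := by
    simpa [hu, sq_abs] using pow_le_pow_left₀ (abs_nonneg _) (abs_real_inner_le_norm u h) 2
  have hb2 : b ^ 2 ≤ a ^ 2 := sq_le_sq' (abs_le.mp hba).1 (abs_le.mp hba).2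
  rw [← pow_le_pow_iff_left₀ (norm_nonneg _) (by positivity) two_ne_zero,
    norm_radialStretch_apply_sq hu, mul_pow]
  nlinarith

lemma exists_orthonormalBasis_apply_eq [FiniteDimensional ℝ E] {ι : Type*} [Fintype ι]
    (hcard : Module.finrank ℝ E = Fintype.card ι) (hu : ‖u‖ = 1) (i : ι) :
    ∃ bb : OrthonormalBasis ι ℝ E, bb i = u := by
  have hv : Orthonormal ℝ (({i} : Set ι).domRestrict fun _ ↦ u) := by
    refine ⟨fun _ ↦ hu, fun j k hjk ↦ absurd (Subsingleton.elim j k) hjk⟩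
  obtain ⟨bb, hbb⟩ := hv.exists_orthonormalBasis_extension_of_card_eq hcard
  exact ⟨bb, hbb i rfl⟩

lemma det_radialStretch [FiniteDimensional ℝ E] (hu : ‖u‖ = 1) :
    (radialStretch a b u).det = b * a ^ (Module.finrank ℝ E - 1) := by
  have : Nontrivial E := nontrivial_of_ne u 0 (by rintro rfl; simp at hu)
  set m := Module.finrank ℝ E - 1
  have hcard : Module.finrank ℝ E = Fintype.card (Fin (m + 1)) := by
    have := Module.finrank_pos (R := ℝ) (M := E)
    simp only [Fintype.card_fin]; omega
  obtain ⟨bb, hbb⟩ := exists_orthonormalBasis_apply_eq hcard hu 0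
  have hM : LinearMap.toMatrix bb.toBasis bb.toBasis (radialStretch a b u : E →ₗ[ℝ] E) =
      Matrix.diagonal (Fin.cons b fun _ ↦ a) := by
    ext i j
    rw [LinearMap.toMatrix_apply]
    simp only [OrthonormalBasis.coe_toBasis, OrthonormalBasis.coe_toBasis_repr_apply,
      OrthonormalBasis.repr_apply_apply, ContinuousLinearMap.coe_coe, radialStretch_apply,
      ← hbb, inner_add_right, real_inner_smul_right, orthonormal_iff_ite.mp bb.orthonormal]
    refine Fin.cases ?_ (fun i ↦ ?_) i <;> refine Fin.cases ?_ (fun j ↦ ?_) j <;>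
      simp [Matrix.diagonal_apply, Fin.succ_ne_zero, (Fin.succ_ne_zero _).symm]
  rw [ContinuousLinearMap.det, ← LinearMap.det_toMatrix bb.toBasis, hM, Matrix.det_diagonal,
    Fin.prod_univ_succ]
  simp [m]

lemma opNorm_radialStretch [FiniteDimensional ℝ E] (hu : ‖u‖ = 1) (hba : |b| ≤ a)
    (hdim : 2 ≤ Module.finrank ℝ E) : ‖radialStretch a b u‖ = a := by
  have hcard : Module.finrank ℝ E = Fintype.card (Fin (Module.finrank ℝ E)) := by simp
  obtain ⟨bb, hbb⟩ := exists_orthonormalBasis_apply_eq hcard hu ⟨0, by omega⟩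
  set v := bb ⟨1, by omega⟩
  have hv : ‖v‖ = 1 := bb.orthonormal.1 _
  have huv : ⟪u, v⟫ = 0 := hbb ▸ bb.orthonormal.2 (by simp)
  refine le_antisymm ((radialStretch a b u).opNorm_le_bound ((abs_nonneg b).trans hba)
    (norm_radialStretch_apply_le hu hba)) ?_
  have hle := (radialStretch a b u).le_opNorm v
  rw [radialStretch_apply_of_inner_eq_zero huv, norm_smul, hv, mul_one, mul_one] at hle
  exact (le_abs_self a).trans hle

lemma opNorm_pow_div_abs_det_radialStretch [FiniteDimensional ℝ E] (hu : ‖u‖ = 1) (hb : 0 < b)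
    (hba : b ≤ a) (hdim : 2 ≤ Module.finrank ℝ E) :
    ‖radialStretch a b u‖ ^ Module.finrank ℝ E / |(radialStretch a b u).det| = a / b := by
  have ha : 0 < a := hb.trans_le hba
  obtain ⟨m, hm⟩ : ∃ m, Module.finrank ℝ E = m + 1 := ⟨_, (Nat.sub_add_cancel (by omega)).symm⟩
  rw [opNorm_radialStretch hu ((abs_of_pos hb).trans_le hba) hdim, det_radialStretch hu,
    abs_of_pos (by positivity), hm, Nat.add_sub_cancel, pow_succ]
  field_simp

end RadialStretch

lemma norm_mem_Ioo_of_mem_ball_diff {E : Type*} [NormedAddCommGroup E] {R : ℝ} {x : E}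
    (hx : x ∈ ball 0 R \ {0}) : ‖x‖ ∈ Ioo 0 R :=
  ⟨norm_pos_iff.2 hx.2, mem_ball_zero_iff.1 hx.1⟩

lemma norm_inv_norm_smul {E : Type*} [NormedAddCommGroup E] [NormedSpace ℝ E] {x : E}
    (hx : x ≠ 0) : ‖‖x‖⁻¹ • x‖ = 1 := by
  simpa using norm_smul_inv_norm (𝕜 := ℝ) hx

section RadialMap

variable {E : Type*} [NormedAddCommGroup E] [InnerProductSpace ℝ E] {φ : ℝ → ℝ} {x : E} {R : ℝ}

noncomputable def radialMap (φ : ℝ → ℝ) (x : E) : E := (φ ‖x‖ * ‖x‖⁻¹) • x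

lemma norm_radialMap (hx : x ≠ 0) (hφ : 0 ≤ φ ‖x‖) : ‖radialMap φ x‖ = φ ‖x‖ := by
  rw [radialMap, norm_smul, norm_mul, norm_inv, norm_norm, Real.norm_of_nonneg hφ, mul_assoc,
    inv_mul_cancel₀ (norm_ne_zero_iff.2 hx), mul_one]

lemma hasFDerivAt_norm_of_ne_zero (hx : x ≠ 0) :
    HasFDerivAt (‖·‖) (‖x‖⁻¹ • innerSL ℝ x) x := by
  have hsqrt := (hasStrictFDerivAt_norm_sq x).hasFDerivAt.sqrt (by positivity)
  simp only [Real.sqrt_sq (norm_nonneg _)] at hsqrt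
  convert hsqrt using 1
  ext h
  simp only [smul_apply, coe_innerSL_apply, smul_eq_mul, one_div, mul_inv_rev, nsmul_eq_mul,
    Nat.cast_ofNat]
  field_simp

lemma hasFDerivAt_radialMap {φ' : ℝ} (hx : x ≠ 0) (hφ : HasDerivAt φ φ' ‖x‖) :
    HasFDerivAt (radialMap φ) (radialStretch (φ ‖x‖ / ‖x‖) φ' (‖x‖⁻¹ • x)) x := by
  have hr : ‖x‖ ≠ 0 := norm_ne_zero_iff.2 hx
  have hψ : HasDerivAt (fun t ↦ φ t * t⁻¹) (φ' * ‖x‖⁻¹ + φ ‖x‖ * -(‖x‖ ^ 2)⁻¹) ‖x‖ :=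
    hφ.mul (hasDerivAt_inv hr)
  refine ((hψ.comp_hasFDerivAt x (hasFDerivAt_norm_of_ne_zero hx)).smul
    (hasFDerivAt_id x)).congr_fderiv ?_
  ext h
  simp only [Function.comp_apply, id_eq, add_apply, smul_apply, ContinuousLinearMap.id_apply,
    ContinuousLinearMap.smulRight_apply, coe_innerSL_apply, smul_eq_mul, smul_smul,
    radialStretch_apply, real_inner_smul_left, div_eq_mul_inv]
  congr 2
  field_simp
  ring

lemma contDiffAt_radialMap {k : WithTop ℕ∞} (hx : x ≠ 0) (hφ : ContDiffAt ℝ k φ ‖x‖) :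
    ContDiffAt ℝ k (radialMap φ) x :=
  ((hφ.comp x (contDiffAt_norm ℝ hx)).mul ((contDiffAt_norm ℝ hx).inv (norm_ne_zero_iff.2 hx))).smul
    contDiffAt_id

lemma injOn_radialMap (hmono : StrictMonoOn φ (Icc 0 R)) (h0 : 0 ≤ φ 0) :
    InjOn (radialMap φ) (ball (0 : E) R \ {0}) := by
  intro x hx y hy hxy
  have hx' := norm_mem_Ioo_of_mem_ball_diff hx
  have hy' := norm_mem_Ioo_of_mem_ball_diff hy
  have hpos : ∀ t ∈ Ioo 0 R, 0 < φ t := fun t ht ↦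
    h0.trans_lt (hmono (left_mem_Icc.2 (ht.1.trans ht.2).le) (Ioo_subset_Icc_self ht) ht.1)
  have hnorm : ‖x‖ = ‖y‖ := by
    refine hmono.injOn (Ioo_subset_Icc_self hx') (Ioo_subset_Icc_self hy') ?_
    rw [← norm_radialMap hx.2 (hpos _ hx').le, ← norm_radialMap hy.2 (hpos _ hy').le, hxy]
  rw [radialMap, radialMap, hnorm] at hxy
  exact smul_right_injective E (mul_pos (hpos _ hy') (inv_pos.2 hy'.1)).ne' hxy

lemma image_radialMap (hR : 0 ≤ R) (hcont : ContinuousOn φ (Icc 0 R))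
    (hmono : StrictMonoOn φ (Icc 0 R)) (h0 : 0 ≤ φ 0) :
    radialMap φ '' (ball (0 : E) R \ {0}) = {y | φ 0 < ‖y‖ ∧ ‖y‖ < φ R} := by
  ext y
  constructor
  · rintro ⟨x, hx, rfl⟩
    have hx' := norm_mem_Ioo_of_mem_ball_diff hx
    have hlt := hmono (left_mem_Icc.2 hR) (Ioo_subset_Icc_self hx') hx'.1
    have hnorm := norm_radialMap (φ := φ) hx.2 (h0.trans hlt.le)
    exact ⟨hnorm ▸ hlt, hnorm ▸ hmono (Ioo_subset_Icc_self hx') (right_mem_Icc.2 hR) hx'.2⟩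
  · rintro ⟨h0y, hyR⟩
    obtain ⟨t, ht, hφt⟩ := intermediate_value_Icc hR hcont ⟨h0y.le, hyR.le⟩
    have hy : 0 < ‖y‖ := h0.trans_lt h0y
    have ht' : t ∈ Ioo 0 R :=
      ⟨ht.1.lt_of_ne (by rintro rfl; exact h0y.ne hφt),
        ht.2.lt_of_ne (by rintro rfl; exact hyR.ne' hφt)⟩
    have hxt : ‖(t * ‖y‖⁻¹) • y‖ = t := by
      rw [norm_smul, Real.norm_of_nonneg (mul_nonneg ht.1 (inv_nonneg.2 hy.le)), mul_assoc,
        inv_mul_cancel₀ hy.ne', mul_one]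
    refine ⟨(t * ‖y‖⁻¹) • y, ⟨mem_ball_zero_iff.2 (by rw [hxt]; exact ht'.2), ?_⟩, ?_⟩
    · rw [mem_singleton_iff, ← norm_eq_zero, hxt]
      exact ht'.1.ne'
    · rw [radialMap, hxt, hφt, smul_smul]
      field_simp [ht'.1.ne', hy.ne']
      exact one_smul ℝ y

end RadialMap

lemma continuousOn_invFunOn_of_map_nhds_eq {α β : Type*} [TopologicalSpace α] [TopologicalSpace β]
    [Nonempty α] {f : α → β} {s : Set α} (hinj : InjOn f s) (hs : IsOpen s)
    (hmap : ∀ x ∈ s, map f (𝓝 x) = 𝓝 (f x)) :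
    ContinuousOn (Function.invFunOn f s) (f '' s) := by
  rw [_root_.continuousOn_iff]
  rintro _ ⟨x, hxs, rfl⟩ t ht hxt
  rw [hinj.leftInvOn_invFunOn hxs] at hxt
  refine ⟨f '' (t ∩ s), ?_, ⟨x, ⟨hxt, hxs⟩, rfl⟩, ?_⟩
  · rw [isOpen_iff_mem_nhds]
    rintro _ ⟨w, hw, rfl⟩
    rw [← hmap w hw.2, mem_map]
    exact mem_of_superset ((ht.inter hs).mem_nhds hw) (subset_preimage_image f _)
  · rintro _ ⟨⟨w, hw, rfl⟩, -⟩
    rw [mem_preimage, hinj.leftInvOn_invFunOn hw.2]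
    exact hw.1

lemma HasStrictFDerivAt.map_nhds_eq_of_det_ne_zero {𝕜 E : Type*} [NontriviallyNormedField 𝕜]
    [CompleteSpace 𝕜] [NormedAddCommGroup E] [NormedSpace 𝕜 E] [FiniteDimensional 𝕜 E]
    {f : E → E} {f' : E →L[𝕜] E} {x : E} (hf : HasStrictFDerivAt f f' x) (hdet : f'.det ≠ 0) :
    map f (𝓝 x) = 𝓝 (f x) := by
  have := FiniteDimensional.complete 𝕜 E
  refine hf.map_nhds_eq_of_surj (LinearMap.range_eq_top.2 ?_)
  exact (Module.End.isUnit_iff _).1 ((LinearMap.isUnit_iff_isUnit_det _).2 hdet.isUnit) |>.2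

section RadMap

variable {n : ℕ} {K : ℝ → ℝ} {x : EuclideanSpace ℝ (Fin n)}

lemma radMap_eq_radialMap : radMap n K = radialMap fun r ↦ Real.exp (Ifun K r) := rfl

noncomputable def outerDilatation (f : EuclideanSpace ℝ (Fin n) → EuclideanSpace ℝ (Fin n))
    (x : EuclideanSpace ℝ (Fin n)) : ℝ :=
  ‖fderiv ℝ f x‖ ^ n / |(fderiv ℝ f x).det|

lemma contDiffAt_radMap (hKcont : ContinuousOn K (Ioo 0 1)) (hKpos : ∀ r ∈ Ioo 0 1, 0 < K r)
    (hKint : IntegrableOn (fun r ↦ 1 / (r * K r)) (Ioo 0 1)) (hx : x ∈ ball 0 1 \ {0}) :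
    ContDiffAt ℝ 1 (radMap n K) x :=
  radMap_eq_radialMap ▸ contDiffAt_radialMap hx.2 (Real.contDiff_exp.contDiffAt.comp _
    ((Ifun_contDiffOn hKcont hKpos hKint).contDiffAt
      (isOpen_Ioo.mem_nhds (norm_mem_Ioo_of_mem_ball_diff hx))))

lemma hasFDerivAt_radMap (hKcont : ContinuousOn K (Ioo 0 1)) (hKpos : ∀ r ∈ Ioo 0 1, 0 < K r)
    (hKint : IntegrableOn (fun r ↦ 1 / (r * K r)) (Ioo 0 1)) (hx : x ∈ ball 0 1 \ {0}) :
    HasFDerivAt (radMap n K)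
      (radialStretch (Real.exp (Ifun K ‖x‖) / ‖x‖) (Real.exp (Ifun K ‖x‖) / ‖x‖ / K ‖x‖)
        (‖x‖⁻¹ • x)) x := by
  have hx' := norm_mem_Ioo_of_mem_ball_diff hx
  have hφ := (Ifun_hasDerivAt hKcont hKpos hKint hx').exp
  rw [show Real.exp (Ifun K ‖x‖) / ‖x‖ / K ‖x‖ = Real.exp (Ifun K ‖x‖) * (1 / (‖x‖ * K ‖x‖)) by
    field_simp]
  exact radMap_eq_radialMap ▸ hasFDerivAt_radialMap hx.2 hφ

lemma det_fderiv_radMap_pos (hKcont : ContinuousOn K (Ioo 0 1))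
    (hKpos : ∀ r ∈ Ioo 0 1, 0 < K r) (hKint : IntegrableOn (fun r ↦ 1 / (r * K r)) (Ioo 0 1))
    (hx : x ∈ ball 0 1 \ {0}) : 0 < (fderiv ℝ (radMap n K) x).det := by
  have hx' := norm_mem_Ioo_of_mem_ball_diff hx
  have := hKpos _ hx'
  have := hx'.1
  rw [(hasFDerivAt_radMap hKcont hKpos hKint hx).fderiv,
    det_radialStretch (norm_inv_norm_smul hx.2)]
  positivity

lemma outerDilatation_radMap (hn : 2 ≤ n) (hKcont : ContinuousOn K (Ioo 0 1))
    (hKge : ∀ r ∈ Ioo 0 1, 1 ≤ K r) (hKint : IntegrableOn (fun r ↦ 1 / (r * K r)) (Ioo 0 1))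
    (hx : x ∈ ball 0 1 \ {0}) : outerDilatation (radMap n K) x = K ‖x‖ := by
  have hKpos : ∀ r ∈ Ioo 0 1, 0 < K r := fun r hr ↦ one_pos.trans_le (hKge r hr)
  have hx' := norm_mem_Ioo_of_mem_ball_diff hx
  have ha : 0 < Real.exp (Ifun K ‖x‖) / ‖x‖ := div_pos (Real.exp_pos _) hx'.1
  have hK := hKge _ hx'
  have hrank := finrank_euclideanSpace_fin (𝕜 := ℝ) (n := n)
  have hdil := opNorm_pow_div_abs_det_radialStretch (norm_inv_norm_smul hx.2)
    (div_pos ha (one_pos.trans_le hK)) (div_le_self ha.le hK) (hn.trans_eq hrank.symm)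
  rw [hrank, div_div_cancel₀ ha.ne'] at hdil
  rw [outerDilatation, (hasFDerivAt_radMap hKcont hKpos hKint hx).fderiv, hdil]

end RadMap

/-- Let `n ≥ 2` and `K : (0,1] → [1,∞)` continuous with
`I(1) < ∞` (i.e. `r ↦ 1/(r K(r))` integrable on `(0,1)`), `I(t) = ∫₀ᵗ dr/(r K(r))`.
Then `f(x) = (x/|x|) e^{I(|x|)}` is a `C¹` homeomorphism of `𝔹ⁿ \ {0}` onto the ring
`{1 < |y| < e^{I(1)}}`, differentiable with non-vanishing Jacobian everywhere, and
its outer dilatation satisfies `K_O(x,f) = ‖f′(x)‖ⁿ/|det f′(x)| = K(|x|)`. -/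
theorem stmt_16 (n : ℕ) (hn : 2 ≤ n)
    (K : ℝ → ℝ) (hKcont : ContinuousOn K (Set.Ioc 0 1))
    (hKge : ∀ r ∈ Set.Ioc (0 : ℝ) 1, 1 ≤ K r)
    (hKint : IntegrableOn (fun r : ℝ => 1 / (r * K r)) (Set.Ioo (0 : ℝ) 1)) :
    Set.InjOn (radMap n K) (Metric.ball (0 : EuclideanSpace ℝ (Fin n)) 1 \ {0}) ∧
    radMap n K '' (Metric.ball (0 : EuclideanSpace ℝ (Fin n)) 1 \ {0}) =
      {y : EuclideanSpace ℝ (Fin n) | 1 < ‖y‖ ∧ ‖y‖ < Real.exp (Ifun K 1)} ∧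
    ContDiffOn ℝ 1 (radMap n K) (Metric.ball (0 : EuclideanSpace ℝ (Fin n)) 1 \ {0}) ∧
    ContinuousOn
      (Function.invFunOn (radMap n K) (Metric.ball (0 : EuclideanSpace ℝ (Fin n)) 1 \ {0}))
      {y : EuclideanSpace ℝ (Fin n) | 1 < ‖y‖ ∧ ‖y‖ < Real.exp (Ifun K 1)} ∧
    ∀ x ∈ Metric.ball (0 : EuclideanSpace ℝ (Fin n)) 1 \ {0},
      DifferentiableAt ℝ (radMap n K) x ∧
      (fderiv ℝ (radMap n K) x).det ≠ 0 ∧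
      ‖fderiv ℝ (radMap n K) x‖ ^ n / |(fderiv ℝ (radMap n K) x).det| = K ‖x‖ := by
  have hKcont' := hKcont.mono Ioo_subset_Ioc_self
  have hKge' : ∀ r ∈ Ioo (0 : ℝ) 1, 1 ≤ K r := fun r hr ↦ hKge r (Ioo_subset_Ioc_self hr)
  have hKpos : ∀ r ∈ Ioo (0 : ℝ) 1, 0 < K r := fun r hr ↦ one_pos.trans_le (hKge' r hr)
  have hmono : StrictMonoOn (fun r ↦ Real.exp (Ifun K r)) (Icc 0 1) :=
    Real.exp_strictMono.comp_strictMonoOn (Ifun_strictMonoOn hKcont' hKpos hKint)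
  have hinj := injOn_radialMap (E := EuclideanSpace ℝ (Fin n)) hmono (Real.exp_pos _).le
  have himage := image_radialMap (E := EuclideanSpace ℝ (Fin n)) zero_le_one
    (Ifun_continuousOn hKint).rexp hmono (Real.exp_pos _).le
  rw [Ifun_zero, Real.exp_zero, ← radMap_eq_radialMap] at himage
  rw [← radMap_eq_radialMap] at hinj
  have hC1 (x : EuclideanSpace ℝ (Fin n)) (hx : x ∈ ball 0 1 \ {0}) :=
    contDiffAt_radMap hKcont' hKpos hKint hx
  have hdet (x : EuclideanSpace ℝ (Fin n)) (hx : x ∈ ball 0 1 \ {0}) :=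
    det_fderiv_radMap_pos hKcont' hKpos hKint hx
  refine ⟨hinj, himage, fun x hx ↦ (hC1 x hx).contDiffWithinAt, ?_, fun x hx ↦
    ⟨(hC1 x hx).differentiableAt one_ne_zero, (hdet x hx).ne',
      outerDilatation_radMap hn hKcont' hKge' hKint hx⟩⟩
  rw [← himage]
  exact continuousOn_invFunOn_of_map_nhds_eq hinj (isOpen_ball.sdiff isClosed_singleton) fun x hx ↦
    ((hC1 x hx).hasStrictFDerivAt one_ne_zero).map_nhds_eq_of_det_ne_zero (hdet x hx).ne'
end
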